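/- arXiv:2602.15370 — 4 statements merged into one kernel-verified Lean document; each statement's English description precedes it below -/
import Mathlib

section
/- Let n ∈ ℕ, K > 0, K̄ > 0, η > 0, T > 0, and x₀ ∈ ℝⁿ. Let V : ℝⁿ → ℝ be differentiable with gradient ∇V, and let f : ℝⁿ → ℝⁿ satisfy ⟨∇V(x₀), f(x₀)⟩ ≤ −η‖x₀‖². Let x : ℝ → ℝⁿ satisfy x(0) = x₀, have derivative f(x(s)) at every s ∈ [0, T], and satisfy for every s ∈ [0, T] both |⟨∇V(x(s)), f(x(s))⟩ − ⟨∇V(x₀), f(x₀)⟩| ≤ K̄ ‖x₀‖ ‖x(s) − x₀‖ and ‖x(s) − x₀‖ ≤ ‖x₀‖ (exp(K s) − 1). Then V(x(T)) − V(x₀) ≤ −η‖x₀‖² T + (K̄/K) ‖x₀‖² (exp(K T) − 1 − K T). -/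
open scoped RealInnerProductSpace

/-- Estimate (A.3) in the proof of Proposition 2: the fundamental theorem of calculus
applied to `s ↦ V (x s)`, together with the directional-derivative bound at `x₀`, the
Lipschitz-type bound on `s ↦ ⟨∇V(x(s)), f(x(s))⟩`, and the Gronwall bound (A.1), yields
`V(x(T)) − V(x₀) ≤ −η‖x₀‖² T + (K̄/K) ‖x₀‖² (exp(K T) − 1 − K T)`. -/
theorem stmt_4 (n : ℕ) (K Kb η T : ℝ) (hK : 0 < K) (hKb : 0 < Kb) (hη : 0 < η)
    (hT : 0 < T)
    (x₀ : EuclideanSpace ℝ (Fin n))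
    (V : EuclideanSpace ℝ (Fin n) → ℝ) (hV : Differentiable ℝ V)
    (f : EuclideanSpace ℝ (Fin n) → EuclideanSpace ℝ (Fin n))
    (hdir : ⟪gradient V x₀, f x₀⟫ ≤ -η * ‖x₀‖ ^ 2)
    (x : ℝ → EuclideanSpace ℝ (Fin n)) (hx0 : x 0 = x₀)
    (hx : ∀ s ∈ Set.Icc (0 : ℝ) T, HasDerivAt x (f (x s)) s)
    (hb1 : ∀ s ∈ Set.Icc (0 : ℝ) T,
      |(⟪gradient V (x s), f (x s)⟫ - ⟪gradient V x₀, f x₀⟫)| ≤ Kb * ‖x₀‖ * ‖x s - x₀‖)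
    (hb2 : ∀ s ∈ Set.Icc (0 : ℝ) T, ‖x s - x₀‖ ≤ ‖x₀‖ * (Real.exp (K * s) - 1)) :
    V (x T) - V x₀ ≤
      -η * ‖x₀‖ ^ 2 * T + Kb / K * ‖x₀‖ ^ 2 * (Real.exp (K * T) - 1 - K * T) := by
  set g : ℝ → ℝ := fun s => V (x s) with hg_def
  have hg : ∀ s ∈ Set.Icc (0 : ℝ) T,
      HasDerivAt g (⟪gradient V (x s), f (x s)⟫) s := by
    intro s hs
    have h1 : HasFDerivAt V (InnerProductSpace.toDual ℝ _ (gradient V (x s))) (x s) :=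
      (hV (x s)).hasGradientAt.hasFDerivAt
    have h2 := h1.comp_hasDerivAt s (hx s hs)
    simpa [Function.comp_def] using h2
  set B : ℝ → ℝ := fun s =>
    V x₀ + (-η * ‖x₀‖ ^ 2) * s + Kb * ‖x₀‖ ^ 2 * ((Real.exp (K * s) - 1) / K - s)
    with hB_def
  set B' : ℝ → ℝ := fun s =>
    -η * ‖x₀‖ ^ 2 + Kb * ‖x₀‖ ^ 2 * (Real.exp (K * s) - 1) with hB'_def
  have hB : ∀ s, HasDerivAt B (B' s) s := by
    intro s
    have he : HasDerivAt (fun s => Real.exp (K * s)) (Real.exp (K * s) * K) s := by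
      simpa [mul_comm, Function.comp_def] using (Real.hasDerivAt_exp (K * s)).comp s
        ((hasDerivAt_id s).const_mul K)
    have h := ((hasDerivAt_const s (V x₀)).add
        ((hasDerivAt_id s).const_mul (-η * ‖x₀‖ ^ 2))).add
        ((((he.sub_const 1).div_const K).sub (hasDerivAt_id s)).const_mul (Kb * ‖x₀‖ ^ 2))
    refine h.congr_deriv ?_
    field_simp [hB'_def]
    simp only [hB'_def]
    ring
  have key : g T ≤ B T := by
    refine image_le_of_deriv_right_le_deriv_boundary
      (f := g) (f' := fun s => ⟪gradient V (x s), f (x s)⟫) (B := B) (B' := B')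
      ?_ ?_ ?_ ?_ ?_ ?_ (Set.right_mem_Icc.2 hT.le)
    · intro s hs
      exact (hg s hs).continuousAt.continuousWithinAt
    · intro s hs
      exact (hg s (Set.Ico_subset_Icc_self hs)).hasDerivWithinAt
    · simp [hg_def, hB_def, hx0]
    · exact fun s _ => (hB s).continuousAt.continuousWithinAt
    · exact fun s _ => (hB s).hasDerivWithinAt
    · intro s hs
      have hs' := Set.Ico_subset_Icc_self hs
      have h1 := hb1 s hs'
      have h2 := hb2 s hs'
      have h3 : ⟪gradient V (x s), f (x s)⟫ - ⟪gradient V x₀, f x₀⟫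
          ≤ Kb * ‖x₀‖ * ‖x s - x₀‖ := (abs_le.1 h1).2
      have h4 : Kb * ‖x₀‖ * ‖x s - x₀‖ ≤ Kb * ‖x₀‖ * (‖x₀‖ * (Real.exp (K * s) - 1)) :=
        mul_le_mul_of_nonneg_left h2 (by positivity)
      have : ⟪gradient V (x s), f (x s)⟫
          ≤ -η * ‖x₀‖ ^ 2 + Kb * ‖x₀‖ * (‖x₀‖ * (Real.exp (K * s) - 1)) := by
        nlinarith
      calc ⟪gradient V (x s), f (x s)⟫
          ≤ -η * ‖x₀‖ ^ 2 + Kb * ‖x₀‖ * (‖x₀‖ * (Real.exp (K * s) - 1)) := this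
        _ = B' s := by simp [hB'_def]; ring
  have hBT : B T = V x₀ + (-η * ‖x₀‖ ^ 2 * T
      + Kb / K * ‖x₀‖ ^ 2 * (Real.exp (K * T) - 1 - K * T)) := by
    simp only [hB_def]
    field_simp
    ring
  have : V (x T) ≤ B T := key
  rw [hBT] at this
  linarith
end

section
/- Let n ∈ ℕ and let R > 0, η > 0, K > 0. There exists T_max > 0, depending only on η and K, with the following property. Let T ∈ [0, T_max], let V : ℝⁿ → ℝ be differentiable with gradient ∇V such that ∇V(0) = 0 and ‖∇V(y) − ∇V(z)‖ ≤ K‖y − z‖ for all y, z in the closed ball of radius 2R, let f : ℝⁿ → ℝⁿ satisfy f(0) = 0 and ‖f(y) − f(z)‖ ≤ K‖y − z‖ for all y, z in the closed ball of radius 2R, let x̄ be a point with ‖x̄‖ ≤ R such that ⟨∇V(x̄), f(x̄)⟩ ≤ −η‖x̄‖², and let x : [0, T] → ℝⁿ be continuous with x(0) = x̄ and with derivative f(x(s)) at every s ∈ [0, T]. Then V(x(T)) − V(x̄) ≤ −(η/2) ‖x̄‖² T. -/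
open scoped RealInnerProductSpace

set_option maxHeartbeats 1000000 in
/-- The analytic content of Proposition 2: there exists `T_max > 0`, depending only on
`η` and `K`, such that along any solution of `ẋ = f(x)` on `[0, T]` (with `T ≤ T_max`)
started at a point `x̄ ∈ B(0,R)` where `⟨∇V(x̄), f(x̄)⟩ ≤ −η‖x̄‖²`, the Lyapunov-type
function `V` decreases by at least `(η/2)‖x̄‖² T`, uniformly over all admissible
`V`, `f` and initial points. -/
theorem stmt_6 (η K : ℝ) (hη : 0 < η) (hK : 0 < K) :
    ∃ Tmax > (0 : ℝ), ∀ (n : ℕ) (R : ℝ), 0 < R → ∀ T ∈ Set.Icc (0 : ℝ) Tmax,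
      ∀ V : EuclideanSpace ℝ (Fin n) → ℝ, Differentiable ℝ V →
      gradient V 0 = 0 →
      (∀ y ∈ Metric.closedBall (0 : EuclideanSpace ℝ (Fin n)) (2 * R),
        ∀ z ∈ Metric.closedBall (0 : EuclideanSpace ℝ (Fin n)) (2 * R),
        ‖gradient V y - gradient V z‖ ≤ K * ‖y - z‖) →
      ∀ f : EuclideanSpace ℝ (Fin n) → EuclideanSpace ℝ (Fin n), f 0 = 0 →
      (∀ y ∈ Metric.closedBall (0 : EuclideanSpace ℝ (Fin n)) (2 * R),
        ∀ z ∈ Metric.closedBall (0 : EuclideanSpace ℝ (Fin n)) (2 * R),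
        ‖f y - f z‖ ≤ K * ‖y - z‖) →
      ∀ xb : EuclideanSpace ℝ (Fin n), ‖xb‖ ≤ R →
      ⟪gradient V xb, f xb⟫ ≤ -η * ‖xb‖ ^ 2 →
      ∀ x : ℝ → EuclideanSpace ℝ (Fin n),
      ContinuousOn x (Set.Icc 0 T) → x 0 = xb →
      (∀ s ∈ Set.Icc (0 : ℝ) T, HasDerivAt x (f (x s)) s) →
      V (x T) - V xb ≤ -(η / 2) * ‖xb‖ ^ 2 * T := by
  refine ⟨min (Real.log (3/2) / K) (η / (8 * K ^ 3)), ?_, ?_⟩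
  · apply lt_min
    · exact div_pos (Real.log_pos (by norm_num)) hK
    · positivity
  intro n R hR T hT V hV hV0 hVlip f hf0 hflip xb hxb hdec x hxc hx0 hxd
  obtain ⟨hT0, hTmax⟩ := hT
  have hTlog : K * T ≤ Real.log (3/2) := by
    have h := le_trans hTmax (min_le_left _ _)
    calc K * T ≤ K * (Real.log (3/2) / K) := mul_le_mul_of_nonneg_left h hK.le
      _ = Real.log (3/2) := by field_simp
  have hTK : T ≤ η / (8 * K ^ 3) := le_trans hTmax (min_le_right _ _)
  have hxb0 : (0:ℝ) ≤ ‖xb‖ := norm_nonneg _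
  have h0ball : (0 : EuclideanSpace ℝ (Fin n)) ∈
      Metric.closedBall (0 : EuclideanSpace ℝ (Fin n)) (2 * R) :=
    Metric.mem_closedBall_self (by positivity)
  have hxbball : xb ∈ Metric.closedBall (0 : EuclideanSpace ℝ (Fin n)) (2 * R) := by
    rw [Metric.mem_closedBall, dist_zero_right]; linarith
  have hexp : ∀ s ∈ Set.Icc (0:ℝ) T, Real.exp (K * s) ≤ 3/2 := by
    intro s hs
    have h : K * s ≤ Real.log (3/2) := le_trans
      (mul_le_mul_of_nonneg_left hs.2 hK.le) hTlog
    calc Real.exp (K * s) ≤ Real.exp (Real.log (3/2)) := Real.exp_le_exp.2 h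
      _ = 3/2 := Real.exp_log (by norm_num)
  -- key Gronwall step
  have key : ∀ s ∈ Set.Icc (0:ℝ) T, (∀ u ∈ Set.Ico (0:ℝ) s, ‖x u‖ ≤ 2 * R) →
      ‖x s - xb‖ ≤ ‖xb‖ * (Real.exp (K * s) - 1) := by
    intro s hs hball
    have hsub : Set.Icc (0:ℝ) s ⊆ Set.Icc 0 T := Set.Icc_subset_Icc le_rfl hs.2
    have hsub' : Set.Ico (0:ℝ) s ⊆ Set.Icc 0 T := fun u hu =>
      ⟨hu.1, le_trans hu.2.le hs.2⟩
    have hcont : ContinuousOn (fun u => x u - xb) (Set.Icc 0 s) :=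
      (hxc.mono hsub).sub continuousOn_const
    have hderiv : ∀ u ∈ Set.Ico (0:ℝ) s,
        HasDerivWithinAt (fun u => x u - xb) (f (x u)) (Set.Ici u) u := fun u hu =>
      ((hxd u (hsub' hu)).sub_const xb).hasDerivWithinAt
    have hbound : ∀ u ∈ Set.Ico (0:ℝ) s, ‖f (x u)‖ ≤ K * ‖x u - xb‖ + K * ‖xb‖ := by
      intro u hu
      have hmem : x u ∈ Metric.closedBall (0 : EuclideanSpace ℝ (Fin n)) (2 * R) := by
        rw [Metric.mem_closedBall, dist_zero_right]; exact hball u hu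
      have h1 : ‖f (x u)‖ ≤ K * ‖x u‖ := by
        have h := hflip (x u) hmem 0 h0ball
        simpa [hf0] using h
      have h2 : ‖x u‖ - ‖xb‖ ≤ ‖x u - xb‖ := norm_sub_norm_le _ _
      have h3 : K * ‖x u‖ ≤ K * (‖x u - xb‖ + ‖xb‖) :=
        mul_le_mul_of_nonneg_left (by linarith) hK.le
      linarith [h1, h3]
    have h0 : ‖x 0 - xb‖ ≤ (0:ℝ) := by simp [hx0]
    have hG := norm_le_gronwallBound_of_norm_deriv_right_le hcont hderiv h0 hbound s
      ⟨hs.1, le_rfl⟩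
    rw [gronwallBound_of_K_ne_0 hK.ne'] at hG
    simp only [zero_mul, zero_add, sub_zero] at hG
    calc ‖x s - xb‖ ≤ K * ‖xb‖ / K * (Real.exp (K * s) - 1) := hG
      _ = ‖xb‖ * (Real.exp (K * s) - 1) := by field_simp
  -- no escape from the ball of radius 2R
  have hball : ∀ s ∈ Set.Icc (0:ℝ) T, ‖x s‖ < 2 * R := by
    by_contra h
    push_neg at h
    obtain ⟨s₀, hs₀, hs₀R⟩ := h
    set A : Set ℝ := {s ∈ Set.Icc (0:ℝ) T | 2 * R ≤ ‖x s‖} with hA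
    have hAne : A.Nonempty := ⟨s₀, hs₀, hs₀R⟩
    have hAclosed : IsClosed A := by
      have hAeq : A = Set.Icc 0 T ∩ (fun s => ‖x s‖) ⁻¹' Set.Ici (2 * R) := by
        ext u; simp [hA, Set.mem_setOf_eq]
      rw [hAeq]
      exact ContinuousOn.preimage_isClosed_of_isClosed hxc.norm isClosed_Icc isClosed_Ici
    have hAbdd : BddBelow A := ⟨0, fun u hu => hu.1.1⟩
    set t := sInf A with ht
    have htA : t ∈ A := hAclosed.csInf_mem hAne hAbdd
    have htIcc : t ∈ Set.Icc (0:ℝ) T := htA.1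
    have hlt : ∀ u ∈ Set.Ico (0:ℝ) t, ‖x u‖ ≤ 2 * R := by
      intro u hu
      by_contra hu2
      push_neg at hu2
      have hmem : u ∈ A := ⟨⟨hu.1, le_trans hu.2.le htIcc.2⟩, hu2.le⟩
      exact absurd (csInf_le hAbdd hmem) (not_le.2 hu.2)
    have hG := key t htIcc hlt
    have he : Real.exp (K * t) ≤ 3/2 := hexp t htIcc
    have hsn : ‖x t‖ - ‖xb‖ ≤ ‖x t - xb‖ := norm_sub_norm_le _ _
    have h5 : ‖xb‖ * Real.exp (K * t) ≤ R * (3/2) :=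
      mul_le_mul hxb he (Real.exp_pos _).le hR.le
    have h6 : ‖xb‖ + ‖xb‖ * (Real.exp (K * t) - 1) = ‖xb‖ * Real.exp (K * t) := by ring
    have hcontr : ‖x t‖ < 2 * R := by linarith [htA.2]
    exact absurd htA.2 (not_le.2 hcontr)
  have hdist : ∀ s ∈ Set.Icc (0:ℝ) T, ‖x s - xb‖ ≤ ‖xb‖ * (Real.exp (K * s) - 1) :=
    fun s hs => key s hs (fun u hu => (hball u ⟨hu.1, le_trans hu.2.le hs.2⟩).le)
  have hgxb : ‖gradient V xb‖ ≤ K * ‖xb‖ := by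
    have h := hVlip xb hxbball 0 h0ball
    simpa [hV0] using h
  -- derivative bound
  have hDbound : ∀ s ∈ Set.Icc (0:ℝ) T,
      ⟪gradient V (x s), f (x s)⟫ ≤ -(η/2) * ‖xb‖ ^ 2 := by
    intro s hs
    set y := x s with hy
    set d := ‖y - xb‖ with hd
    have hd0 : (0:ℝ) ≤ d := norm_nonneg _
    have hyball : y ∈ Metric.closedBall (0 : EuclideanSpace ℝ (Fin n)) (2 * R) := by
      rw [Metric.mem_closedBall, dist_zero_right]; exact (hball s hs).le
    have hfy : ‖f y‖ ≤ K * ‖y‖ := by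
      have h := hflip y hyball 0 h0ball
      simpa [hf0] using h
    have hgrad : ‖gradient V y - gradient V xb‖ ≤ K * d := hVlip y hyball xb hxbball
    have hfdiff : ‖f y - f xb‖ ≤ K * d := hflip y hyball xb hxbball
    have hdexp : d ≤ ‖xb‖ * (Real.exp (K * s) - 1) := hdist s hs
    have he32 : Real.exp (K * s) ≤ 3/2 := hexp s hs
    have hks0 : (0:ℝ) ≤ K * s := mul_nonneg hK.le hs.1
    have het : Real.exp (K * s) - 1 ≤ K * s * Real.exp (K * s) := by
      have h1 : -(K * s) + 1 ≤ Real.exp (-(K * s)) := Real.add_one_le_exp _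
      have hmul : Real.exp (K * s) * Real.exp (-(K * s)) = 1 := by
        rw [← Real.exp_add]; simp
      nlinarith [mul_le_mul_of_nonneg_left h1 (Real.exp_pos (K * s)).le]
    have hd1 : d ≤ ‖xb‖ / 2 := by
      have h := mul_le_mul_of_nonneg_left (by linarith : Real.exp (K * s) - 1 ≤ (1:ℝ)/2) hxb0
      linarith
    have hd2 : d ≤ (3/2) * K * T * ‖xb‖ := by
      have h1 : K * s * Real.exp (K * s) ≤ K * s * (3/2) :=
        mul_le_mul_of_nonneg_left he32 hks0
      have hks : K * s ≤ K * T := mul_le_mul_of_nonneg_left hs.2 hK.le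
      have h2 : Real.exp (K * s) - 1 ≤ (3/2) * (K * T) := by nlinarith
      have h3 := mul_le_mul_of_nonneg_left h2 hxb0
      nlinarith
    have hyn : ‖y‖ ≤ ‖xb‖ + d := by
      have h := norm_sub_norm_le y xb
      linarith
    have hsplit : ⟪gradient V y, f y⟫ =
        ⟪gradient V y - gradient V xb, f y⟫ + ⟪gradient V xb, f y - f xb⟫
          + ⟪gradient V xb, f xb⟫ := by
      rw [inner_sub_left, inner_sub_right]; ring
    have hb1 : ⟪gradient V y - gradient V xb, f y⟫ ≤ (K * d) * (K * ‖y‖) :=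
      le_trans (real_inner_le_norm _ _)
        (mul_le_mul hgrad hfy (norm_nonneg _) (by positivity))
    have hb2 : ⟪gradient V xb, f y - f xb⟫ ≤ (K * ‖xb‖) * (K * d) :=
      le_trans (real_inner_le_norm _ _)
        (mul_le_mul hgxb hfdiff (norm_nonneg _) (by positivity))
    have hsum : 2 * ‖xb‖ + d ≤ (5/2) * ‖xb‖ := by linarith
    have hprod : d * (2 * ‖xb‖ + d) ≤ ((3/2) * K * T * ‖xb‖) * ((5/2) * ‖xb‖) :=
      mul_le_mul hd2 hsum (by linarith) (by positivity)
    have hK2 : (0:ℝ) ≤ K ^ 2 := sq_nonneg K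
    have hmain : (K * d) * (K * ‖y‖) + (K * ‖xb‖) * (K * d)
        ≤ (15/4) * (K ^ 3 * T) * ‖xb‖ ^ 2 := by
      have hyd : K ^ 2 * d * ‖y‖ ≤ K ^ 2 * d * (‖xb‖ + d) :=
        mul_le_mul_of_nonneg_left hyn (by positivity)
      nlinarith [mul_le_mul_of_nonneg_left hprod hK2]
    have hTub : K ^ 3 * T ≤ η / 8 := by
      rw [le_div_iff₀ (by positivity)] at hTK
      nlinarith
    have hT2 : (15/4) * (K ^ 3 * T) * ‖xb‖ ^ 2 ≤ (η/2) * ‖xb‖ ^ 2 := by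
      nlinarith [mul_le_mul_of_nonneg_right hTub (sq_nonneg ‖xb‖),
        mul_nonneg hη.le (sq_nonneg ‖xb‖)]
    rw [hsplit]
    linarith [hdec]
  -- chain rule
  have hchain : ∀ s ∈ Set.Icc (0:ℝ) T,
      HasDerivAt (fun u => V (x u)) ⟪gradient V (x s), f (x s)⟫ s := by
    intro s hs
    have hGr : HasFDerivAt V (InnerProductSpace.toDual ℝ _ (gradient V (x s))) (x s) :=
      (hV (x s)).hasGradientAt.hasFDerivAt
    have h := hGr.comp_hasDerivAt s (hxd s hs)
    simp at h ⊢
    exact h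
  set c := (η/2) * ‖xb‖ ^ 2 with hc
  set φ : ℝ → ℝ := fun u => V (x u) + c * u with hφ
  have hφcont : ContinuousOn φ (Set.Icc 0 T) :=
    (hV.continuous.comp_continuousOn hxc).add (continuousOn_const.mul continuousOn_id)
  have hφderiv : ∀ s ∈ Set.Icc (0:ℝ) T,
      HasDerivAt φ (⟪gradient V (x s), f (x s)⟫ + c) s := by
    intro s hs
    have h := (hchain s hs).add (((hasDerivAt_id s).const_mul c))
    simp [hφ, mul_one] at h ⊢
    exact h
  have hint : interior (Set.Icc (0:ℝ) T) ⊆ Set.Icc 0 T := interior_subset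
  have hanti : AntitoneOn φ (Set.Icc 0 T) := by
    apply antitoneOn_of_deriv_nonpos (convex_Icc 0 T) hφcont
    · intro s hs
      exact ((hφderiv s (hint hs)).differentiableAt).differentiableWithinAt
    · intro s hs
      rw [(hφderiv s (hint hs)).deriv]
      have h := hDbound s (hint hs)
      simp only [hc] at h ⊢
      linarith
  have h0T : φ T ≤ φ 0 := hanti (Set.left_mem_Icc.2 hT0) ⟨hT0, le_rfl⟩ hT0
  simp only [hφ, hx0, mul_zero, add_zero] at h0T
  simp only [hc] at h0T
  linarith
end

section
/- Let n ∈ ℕ, T > 0, K > 0, and let α, β : [0, ∞) → [0, ∞) be continuous strictly increasing functions with α(0) = β(0) = 0. For every R > 0 there exists δ > 0, depending only on R, T, K, α and β, with the following property: for every V : ℝⁿ → ℝ with α(‖x‖) ≤ V(x) ≤ β(‖x‖) for all x ∈ ℝⁿ, and every function y : [0, ∞) → ℝⁿ satisfying (i) V(y((k+1)T)) ≤ V(y(kT)) for all k ∈ ℕ and (ii) ‖y(kT + τ)‖ ≤ ‖y(kT)‖ exp(K τ) for all k ∈ ℕ and all τ ∈ [0, T], if ‖y(0)‖ < δ then ‖y(t)‖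 < R for all t ≥ 0. -/
/-- Part (1), uniform stability, of the main Theorem: for every `R > 0` there is a
`δ > 0` (depending only on `R`, `T`, `K`, `α`, `β`) such that any trajectory `y`
satisfying the periodic decrease of the Lyapunov-type function `V` at the sampling
instants `kT` and the exponential interpolation bound (5.3) between them, with
`‖y 0‖ < δ`, remains in the ball of radius `R` for all `t ≥ 0`. -/
theorem stmt_10 (n : ℕ) (T K : ℝ) (hT : 0 < T) (hK : 0 < K) (α β : ℝ → ℝ)
    (hαc : ContinuousOn α (Set.Ici 0)) (hβc : ContinuousOn β (Set.Ici 0))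
    (hα_mono : StrictMonoOn α (Set.Ici 0)) (hβ_mono : StrictMonoOn β (Set.Ici 0))
    (hα_nonneg : ∀ s : ℝ, 0 ≤ s → 0 ≤ α s) (hβ_nonneg : ∀ s : ℝ, 0 ≤ s → 0 ≤ β s)
    (hα0 : α 0 = 0) (hβ0 : β 0 = 0) :
    ∀ R > (0 : ℝ), ∃ δ > (0 : ℝ),
      ∀ V : EuclideanSpace ℝ (Fin n) → ℝ,
      (∀ x : EuclideanSpace ℝ (Fin n), α ‖x‖ ≤ V x ∧ V x ≤ β ‖x‖) →
      ∀ y : ℝ → EuclideanSpace ℝ (Fin n),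
      (∀ k : ℕ, V (y ((k + 1) * T)) ≤ V (y (k * T))) →
      (∀ k : ℕ, ∀ τ ∈ Set.Icc (0 : ℝ) T,
        ‖y (k * T + τ)‖ ≤ ‖y (k * T)‖ * Real.exp (K * τ)) →
      ‖y 0‖ < δ → ∀ t : ℝ, 0 ≤ t → ‖y t‖ < R := by
  intro R hR
  -- radius at sampling instants
  set r : ℝ := R * Real.exp (-(K * T)) with hr_def
  have hr : 0 < r := mul_pos hR (Real.exp_pos _)
  have hαr : 0 < α r := by
    have := hα_mono (Set.self_mem_Ici) (le_of_lt hr) hr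
    rwa [hα0] at this
  -- continuity of β at 0 within Ici 0 yields δ
  have hcw : ContinuousWithinAt β (Set.Ici 0) 0 := hβc 0 Set.self_mem_Ici
  rw [Metric.continuousWithinAt_iff] at hcw
  obtain ⟨δ, hδpos, hδ⟩ := hcw (α r) hαr
  refine ⟨δ, hδpos, ?_⟩
  intro V hV y hdec hinterp hy0 t ht
  -- β ‖y 0‖ < α r
  have hy0n : (0:ℝ) ≤ ‖y 0‖ := norm_nonneg _
  have hβy0 : β ‖y 0‖ < α r := by
    have := hδ hy0n (by rwa [Real.dist_eq, sub_zero, abs_of_nonneg hy0n])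
    rw [Real.dist_eq, hβ0, sub_zero] at this
    calc β ‖y 0‖ ≤ |β ‖y 0‖| := le_abs_self _
      _ < α r := this
  -- V at sampling instants decreases below V (y 0)
  have hVk : ∀ k : ℕ, V (y (k * T)) ≤ V (y 0) := by
    intro k
    induction k with
    | zero => simp
    | succ k ih =>
      have := hdec k
      have h2 : ((k : ℝ) + 1) = ((k + 1 : ℕ) : ℝ) := by push_cast; ring
      rw [h2] at this
      exact this.trans ih
  -- norm at sampling instants < r
  have hyk : ∀ k : ℕ, ‖y (k * T)‖ < r := by
    intro k
    by_contra h
    push_neg at h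
    have h1 : α r ≤ α ‖y (k * T)‖ :=
      (hα_mono.monotoneOn (le_of_lt hr) (norm_nonneg _)) h
    have h2 : α ‖y (k * T)‖ ≤ V (y (k * T)) := (hV _).1
    have h3 : V (y 0) ≤ β ‖y 0‖ := (hV _).2
    linarith [hVk k]
  -- decompose t = kT + τ
  set k : ℕ := ⌊t / T⌋.toNat with hk_def
  have hfl : (0:ℤ) ≤ ⌊t / T⌋ := Int.floor_nonneg.mpr (div_nonneg ht hT.le)
  have hkcast : (k : ℝ) = (⌊t / T⌋ : ℝ) := by
    rw [hk_def]
    exact_mod_cast congrArg (Int.cast : ℤ → ℝ) (Int.toNat_of_nonneg hfl)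
  have hk1 : (k : ℝ) ≤ t / T := by rw [hkcast]; exact Int.floor_le _
  have hk2 : t / T < (k : ℝ) + 1 := by rw [hkcast]; exact Int.lt_floor_add_one _
  set τ : ℝ := t - k * T with hτ_def
  have hτ0 : 0 ≤ τ := by
    nlinarith [mul_le_mul_of_nonneg_right hk1 hT.le, (div_mul_cancel₀ t hT.ne')]
  have hτT : τ ≤ T := by
    nlinarith [mul_le_mul_of_nonneg_right hk2.le hT.le, (div_mul_cancel₀ t hT.ne')]
  have hteq : t = k * T + τ := by ring
  have h1 : ‖y t‖ ≤ ‖y (k * T)‖ * Real.exp (K * τ) := by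
    rw [hteq]; exact hinterp k τ ⟨hτ0, hτT⟩
  have hexp : Real.exp (K * τ) ≤ Real.exp (K * T) :=
    Real.exp_le_exp.mpr (mul_le_mul_of_nonneg_left hτT hK.le)
  have h2 : ‖y (k * T)‖ * Real.exp (K * τ) < r * Real.exp (K * T) := by
    have := hyk k
    have hE : 0 < Real.exp (K * τ) := Real.exp_pos _
    calc ‖y (k * T)‖ * Real.exp (K * τ) < r * Real.exp (K * τ) := by
          exact mul_lt_mul_of_pos_right this hE
      _ ≤ r * Real.exp (K * T) := mul_le_mul_of_nonneg_left hexp hr.le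
  have h3 : r * Real.exp (K * T) = R := by
    rw [hr_def, mul_assoc, ← Real.exp_add]
    simp
  linarith
end

section
/- Let n ∈ ℕ, T > 0, K > 0, η > 0, and let α, β : [0, ∞) → [0, ∞) be continuous strictly increasing functions with α(0) = β(0) = 0. Then: (a) for every V : ℝⁿ → ℝ with α(‖x‖) ≤ V(x) ≤ β(‖x‖) for all x ∈ ℝⁿ and every y : [0, ∞) → ℝⁿ satisfying V(y((k+1)T)) − V(y(kT)) ≤ −(η/2) T ‖y(kT)‖² for all k ∈ ℕ and ‖y(kT + τ)‖ ≤ ‖y(kT)‖ exp(K τ) for all k ∈ ℕ and τ ∈ [0, T], one has y(t) → 0 as t → ∞; and (b) for every R > 0 and ρ > 0 there exists T̄ > 0, depending only on R, ρ, T, K, η, α and β, such that every pair (V, y) as in (a) with ‖y(0)‖ ≤ ρ satisfies ‖y(t)‖ < R for all t ≥ T̄. -/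
lemma stmt_13_key (n : ℕ) (T K η : ℝ) (hT : 0 < T) (hK : 0 < K) (hη : 0 < η)
    (α β : ℝ → ℝ)
    (hβc : ContinuousOn β (Set.Ici 0))
    (hα_mono : StrictMonoOn α (Set.Ici 0)) (hβ_mono : StrictMonoOn β (Set.Ici 0))
    (hα_nonneg : ∀ s : ℝ, 0 ≤ s → 0 ≤ α s)
    (hα0 : α 0 = 0) (hβ0 : β 0 = 0) :
    ∀ R > (0 : ℝ), ∀ ρ > (0 : ℝ), ∃ Tbar > (0 : ℝ),
      ∀ V : EuclideanSpace ℝ (Fin n) → ℝ,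
      (∀ x : EuclideanSpace ℝ (Fin n), α ‖x‖ ≤ V x ∧ V x ≤ β ‖x‖) →
      ∀ y : ℝ → EuclideanSpace ℝ (Fin n),
      (∀ k : ℕ, V (y ((k + 1) * T)) - V (y (k * T)) ≤ -(η / 2) * T * ‖y (k * T)‖ ^ 2) →
      (∀ k : ℕ, ∀ τ ∈ Set.Icc (0 : ℝ) T,
        ‖y (k * T + τ)‖ ≤ ‖y (k * T)‖ * Real.exp (K * τ)) →
      ‖y 0‖ ≤ ρ → ∀ t : ℝ, Tbar ≤ t → ‖y t‖ < R := by
  intro R hR ρ hρ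
  set r : ℝ := R * Real.exp (-(K * T)) with hr_def
  have hrpos : 0 < r := mul_pos hR (Real.exp_pos _)
  have hαr : 0 < α r := by
    have := hα_mono (Set.self_mem_Ici) (le_of_lt hrpos : (0:ℝ) ≤ r) hrpos
    rwa [hα0] at this
  -- choose ε > 0 with β ε < α r, by continuity of β at 0
  have hβcont : ContinuousWithinAt β (Set.Ici 0) 0 := hβc 0 Set.self_mem_Ici
  have h1 : β ⁻¹' Set.Iio (α r) ∈ nhdsWithin (0 : ℝ) (Set.Ici 0) := by
    apply hβcont
    rw [hβ0]
    exact Iio_mem_nhds hαr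
  obtain ⟨δ, hδ, hsub⟩ := Metric.mem_nhdsWithin_iff.mp h1
  set ε : ℝ := δ / 2 with hε_def
  have hεpos : 0 < ε := by positivity
  have hβε : β ε < α r := by
    have : ε ∈ Metric.ball (0:ℝ) δ ∩ Set.Ici 0 := by
      constructor
      · simp [Real.dist_eq, abs_of_pos hεpos]
        linarith [abs_of_pos hεpos]
      · exact le_of_lt hεpos
    exact hsub this
  set c : ℝ := η / 2 * T * ε ^ 2 with hc_def
  have hcpos : 0 < c := by positivity
  set N : ℕ := ⌈β ρ / c⌉₊ + 1 with hN_def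
  have hNc : β ρ < N * c := by
    have h2 : β ρ / c < (N : ℝ) := by
      have := Nat.le_ceil (β ρ / c)
      push_cast [hN_def]
      linarith
    calc β ρ = (β ρ / c) * c := by field_simp
    _ < N * c := by exact mul_lt_mul_of_pos_right h2 hcpos
  refine ⟨N * T, by positivity, ?_⟩
  intro V hV y hdec hint hy0 t ht
  set W : ℕ → ℝ := fun k => V (y (k * T)) with hW_def
  have hWsucc : ∀ k, W (k + 1) ≤ W k := by
    intro k
    have := hdec k
    have hnn : 0 ≤ η / 2 * T * ‖y (k * T)‖ ^ 2 := by positivity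
    have : W (k + 1) - W k ≤ -(η / 2) * T * ‖y (k * T)‖ ^ 2 := by
      simpa [hW_def, Nat.cast_add, Nat.cast_one] using this
    nlinarith
  have hWanti : Antitone W := antitone_nat_of_succ_le hWsucc
  have hWlow : ∀ k : ℕ, α ‖y ((k : ℝ) * T)‖ ≤ W k := fun k => (hV _).1
  have hWnonneg : ∀ k, 0 ≤ W k :=
    fun k => le_trans (hα_nonneg _ (norm_nonneg _)) (hWlow k)
  -- there is k ≤ N with ‖y (k T)‖ ≤ ε
  have hex : ∃ k ≤ N, ‖y ((k : ℝ) * T)‖ ≤ ε := by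
    by_contra h
    push_neg at h
    have key : ∀ j ≤ N, W j ≤ W 0 - j * c := by
      intro j hj
      induction j with
      | zero => simp
      | succ j ih =>
        have hjN : j ≤ N := Nat.le_of_succ_le hj
        have hjN' : j < N := hj
        have hεj : ε < ‖y ((j : ℝ) * T)‖ := h j hjN
        have hsq : ε ^ 2 ≤ ‖y ((j : ℝ) * T)‖ ^ 2 := by nlinarith [norm_nonneg (y ((j:ℝ)*T))]
        have hd := hdec j
        have hstep : W (j + 1) ≤ W j - c := by
          have : -(η / 2) * T * ‖y ((j:ℝ) * T)‖ ^ 2 ≤ -c := by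
            rw [hc_def]
            nlinarith [mul_le_mul_of_nonneg_left hsq (by positivity : (0:ℝ) ≤ η / 2 * T)]
          have h2 : W (j + 1) - W j ≤ -(η / 2) * T * ‖y ((j:ℝ) * T)‖ ^ 2 := by
            simpa [hW_def, Nat.cast_add, Nat.cast_one] using hd
          linarith
        have := ih hjN
        push_cast
        linarith
    have hWN := key N le_rfl
    have hW0 : W 0 ≤ β ρ := by
      have h0 : W 0 = V (y 0) := by simp [hW_def]
      have := (hV (y 0)).2
      have hmono : β ‖y 0‖ ≤ β ρ := by
        rcases eq_or_lt_of_le hy0 with h' | h'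
        · rw [h']
        · exact le_of_lt (hβ_mono (norm_nonneg _) (le_of_lt hρ) h')
      rw [h0]; linarith
    have := hWnonneg N
    linarith
  obtain ⟨k, hkN, hk⟩ := hex
  -- for all m ≥ k, ‖y (m T)‖ < r
  have hsmall : ∀ m, k ≤ m → ‖y ((m : ℝ) * T)‖ < r := by
    intro m hm
    by_contra h
    push_neg at h
    have h1 : α r ≤ α ‖y ((m:ℝ) * T)‖ :=
      (hα_mono.monotoneOn) (le_of_lt hrpos) (norm_nonneg _) h
    have h2 : W m ≤ W k := hWanti hm
    have h3 : W k ≤ β ‖y ((k:ℝ) * T)‖ := (hV _).2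
    have h4 : β ‖y ((k:ℝ) * T)‖ ≤ β ε :=
      (hβ_mono.monotoneOn) (norm_nonneg _) (le_of_lt hεpos) hk
    have := hWlow m
    linarith
  -- conclude for arbitrary t ≥ N T
  have ht0 : (0:ℝ) ≤ t := le_trans (by positivity) ht
  set m : ℕ := ⌊t / T⌋₊ with hm_def
  have hm1 : (m : ℝ) ≤ t / T := Nat.floor_le (by positivity)
  have hm2 : t / T < (m : ℝ) + 1 := Nat.lt_floor_add_one _
  have hNm : N ≤ m := Nat.le_floor (by rw [le_div_iff₀ hT]; exact ht)
  set τ : ℝ := t - (m : ℝ) * T with hτ_def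
  have hτ0 : 0 ≤ τ := by
    have : (m : ℝ) * T ≤ t := by
      rw [← le_div_iff₀ hT] ; exact hm1
    show (0:ℝ) ≤ t - (m : ℝ) * T
    linarith
  have hτT : τ ≤ T := by
    have : t < ((m : ℝ) + 1) * T := by
      rw [← div_lt_iff₀ hT]; exact hm2
    show t - (m : ℝ) * T ≤ T
    linarith
  have hI := hint m τ ⟨hτ0, hτT⟩
  have heq : (m : ℝ) * T + τ = t := by ring
  rw [heq] at hI
  have h2 : ‖y ((m:ℝ) * T)‖ * Real.exp (K * τ) ≤ ‖y ((m:ℝ) * T)‖ * Real.exp (K * T) := by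
    apply mul_le_mul_of_nonneg_left _ (norm_nonneg _)
    exact Real.exp_le_exp.mpr (mul_le_mul_of_nonneg_left hτT hK.le)
  have h3 : ‖y ((m:ℝ) * T)‖ * Real.exp (K * T) < r * Real.exp (K * T) :=
    mul_lt_mul_of_pos_right (hsmall m (le_trans hkN hNm)) (Real.exp_pos _)
  have h4 : r * Real.exp (K * T) = R := by
    rw [hr_def, mul_assoc, ← Real.exp_add]
    simp
  linarith

/-- The analytic content of the main Theorem (global uniform asymptotic stability of
the closed loop): (a) every trajectory `y` with the periodic decrease
`V(y((k+1)T)) − V(y(kT)) ≤ −(η/2) T ‖y(kT)‖²` and the exponential interpolation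
bound (5.3) converges to the origin; (b) the convergence is uniform: for every `R > 0`
and `ρ > 0` there exists `T̄ > 0` (depending only on `R, ρ, T, K, η, α, β`) such that
every such trajectory starting with `‖y 0‖ ≤ ρ` satisfies `‖y t‖ < R` for `t ≥ T̄`. -/
theorem stmt_13 (n : ℕ) (T K η : ℝ) (hT : 0 < T) (hK : 0 < K) (hη : 0 < η)
    (α β : ℝ → ℝ)
    (hαc : ContinuousOn α (Set.Ici 0)) (hβc : ContinuousOn β (Set.Ici 0))
    (hα_mono : StrictMonoOn α (Set.Ici 0)) (hβ_mono : StrictMonoOn β (Set.Ici 0))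
    (hα_nonneg : ∀ s : ℝ, 0 ≤ s → 0 ≤ α s) (hβ_nonneg : ∀ s : ℝ, 0 ≤ s → 0 ≤ β s)
    (hα0 : α 0 = 0) (hβ0 : β 0 = 0) :
    (∀ V : EuclideanSpace ℝ (Fin n) → ℝ,
      (∀ x : EuclideanSpace ℝ (Fin n), α ‖x‖ ≤ V x ∧ V x ≤ β ‖x‖) →
      ∀ y : ℝ → EuclideanSpace ℝ (Fin n),
      (∀ k : ℕ, V (y ((k + 1) * T)) - V (y (k * T)) ≤ -(η / 2) * T * ‖y (k * T)‖ ^ 2) →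
      (∀ k : ℕ, ∀ τ ∈ Set.Icc (0 : ℝ) T,
        ‖y (k * T + τ)‖ ≤ ‖y (k * T)‖ * Real.exp (K * τ)) →
      Filter.Tendsto y Filter.atTop (nhds 0)) ∧
    (∀ R > (0 : ℝ), ∀ ρ > (0 : ℝ), ∃ Tbar > (0 : ℝ),
      ∀ V : EuclideanSpace ℝ (Fin n) → ℝ,
      (∀ x : EuclideanSpace ℝ (Fin n), α ‖x‖ ≤ V x ∧ V x ≤ β ‖x‖) →
      ∀ y : ℝ → EuclideanSpace ℝ (Fin n),
      (∀ k : ℕ, V (y ((k + 1) * T)) - V (y (k * T)) ≤ -(η / 2) * T * ‖y (k * T)‖ ^ 2) →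
      (∀ k : ℕ, ∀ τ ∈ Set.Icc (0 : ℝ) T,
        ‖y (k * T + τ)‖ ≤ ‖y (k * T)‖ * Real.exp (K * τ)) →
      ‖y 0‖ ≤ ρ → ∀ t : ℝ, Tbar ≤ t → ‖y t‖ < R) := by
  have key := stmt_13_key n T K η hT hK hη α β hβc hα_mono hβ_mono hα_nonneg hα0 hβ0
  constructor
  · intro V hV y hdec hint
    rw [Metric.tendsto_atTop]
    intro ε hε
    obtain ⟨Tbar, hTbar, hkey⟩ := key ε hε (‖y 0‖ + 1) (by positivity)
    refine ⟨Tbar, fun t ht => ?_⟩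
    rw [dist_zero_right]
    exact hkey V hV y hdec hint (by linarith) t ht
  · exact key
end
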